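/- arXiv:2603.06933 — 2 statements merged into one kernel-verified Lean document; each statement's English description precedes it below -/
import Mathlib

section
/- Let k, γ be real numbers, let M : ℝ → (6×6 real matrices) be a differentiable matrix-valued function such that M(t) is symmetric and invertible for every t and such that |xᵀ M'(t) x| ≤ γ‖x‖² for all t and all x ∈ ℝ⁶, and let e : ℝ → ℝ⁶ be a differentiable function satisfying e'(t) = -k · M(t)⁻¹ · e(t) for all t. Then the Lyapunov function V(t) = e(t)ᵀ M(t) e(t) satisfies the differential inequality V'(t) ≤ -(2k - γ)‖e(t)‖² for all t. -/
open Matrix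

/-- Euclidean norm of a vector in `ℝⁿ` (identified with `Fin n → ℝ`). -/
noncomputable def eNorm {n : ℕ} (x : Fin n → ℝ) : ℝ := Real.sqrt (x ⬝ᵥ x)

/-- Entrywise derivative of a matrix-valued function. -/
noncomputable def matDeriv {n : ℕ} (M : ℝ → Matrix (Fin n) (Fin n) ℝ) (t : ℝ) :
    Matrix (Fin n) (Fin n) ℝ :=
  Matrix.of fun i j => deriv (fun s => M s i j) t

/-! The product rule gives `V' = ė ⬝ Me + e ⬝ Ṁe + e ⬝ Mė`. Along `ė = -k M⁻¹ e` the outer two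
terms are each `-k ‖e‖²` (the first one because `M⁻¹` is symmetric along with `M`), and the
middle one is at most `γ ‖e‖²` by the inertia-rate bound. -/

section ProductRule

variable {n : Type*} [Fintype n] {t : ℝ}

theorem HasDerivAt.dotProduct {u v : ℝ → n → ℝ} {u' v' : n → ℝ}
    (hu : HasDerivAt u u' t) (hv : HasDerivAt v v' t) :
    HasDerivAt (fun s => u s ⬝ᵥ v s) (u' ⬝ᵥ v t + u t ⬝ᵥ v') t := by
  have hsum : HasDerivAt (fun s => u s ⬝ᵥ v s) (∑ i, (u' i * v t i + u t i * v' i)) t :=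
    HasDerivAt.fun_sum fun i _ => (hasDerivAt_pi.mp hu i).fun_mul (hasDerivAt_pi.mp hv i)
  rwa [Finset.sum_add_distrib] at hsum

theorem HasDerivAt.mulVec {M : ℝ → Matrix n n ℝ} {M' : Matrix n n ℝ} {v : ℝ → n → ℝ}
    {v' : n → ℝ} (hM : ∀ i j, HasDerivAt (fun s => M s i j) (M' i j) t)
    (hv : HasDerivAt v v' t) :
    HasDerivAt (fun s => M s *ᵥ v s) (M' *ᵥ v t + M t *ᵥ v') t :=
  hasDerivAt_pi.mpr fun i => (hasDerivAt_pi.mpr (hM i)).dotProduct hv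

theorem HasDerivAt.dotProduct_mulVec {M : ℝ → Matrix n n ℝ} {M' : Matrix n n ℝ}
    {e : ℝ → n → ℝ} {e' : n → ℝ} (hM : ∀ i j, HasDerivAt (fun s => M s i j) (M' i j) t)
    (he : HasDerivAt e e' t) :
    HasDerivAt (fun s => e s ⬝ᵥ M s *ᵥ e s)
      (e' ⬝ᵥ M t *ᵥ e t + e t ⬝ᵥ M' *ᵥ e t + e t ⬝ᵥ M t *ᵥ e') t := by
  simpa only [dotProduct_add, add_assoc] using he.dotProduct (he.mulVec hM)

end ProductRule

section Inverse

variable {n : Type*} [Fintype n] [DecidableEq n] {M : Matrix n n ℝ}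

theorem dotProduct_mulVec_inv_mulVec (hM : IsUnit M.det) (x : n → ℝ) :
    x ⬝ᵥ M *ᵥ (M⁻¹ *ᵥ x) = x ⬝ᵥ x := by
  rw [mulVec_mulVec, mul_nonsing_inv M hM, one_mulVec]

theorem Matrix.IsSymm.inv_mulVec_dotProduct_mulVec (hS : M.IsSymm) (hM : IsUnit M.det)
    (x : n → ℝ) :
    (M⁻¹ *ᵥ x) ⬝ᵥ M *ᵥ x = x ⬝ᵥ x := by
  rw [dotProduct_mulVec, ← mulVec_transpose, hS.eq, mulVec_mulVec, mul_nonsing_inv M hM,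
    one_mulVec]

end Inverse

theorem eNorm_sq {n : ℕ} (x : Fin n → ℝ) : eNorm x ^ 2 = x ⬝ᵥ x :=
  Real.sq_sqrt (Finset.sum_nonneg fun i _ => mul_self_nonneg (x i))

/-- eq. (32): under the inertia-rate bound `|xᵀ Ṁ x| ≤ γ‖x‖²`, the
Lyapunov function `V = eᵀ M e` of the error dynamics `ė = -k M⁻¹ e` satisfies
`V̇ ≤ -(2k - γ)‖e‖²`. -/
theorem lyapunov_decay_estimate
    (k γ : ℝ) (M : ℝ → Matrix (Fin 6) (Fin 6) ℝ)
    (hMdiff : ∀ i j, Differentiable ℝ fun t => M t i j)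
    (hMsymm : ∀ t, (M t).IsSymm)
    (hMinv : ∀ t, IsUnit (M t).det)
    (hMrate : ∀ t, ∀ x : Fin 6 → ℝ, |x ⬝ᵥ (matDeriv M t).mulVec x| ≤ γ * eNorm x ^ 2)
    (e : ℝ → Fin 6 → ℝ) (he : Differentiable ℝ e)
    (hdyn : ∀ t, deriv e t = (-k) • (M t)⁻¹.mulVec (e t)) :
    ∀ t, deriv (fun s => e s ⬝ᵥ (M s).mulVec (e s)) t
        ≤ -(2 * k - γ) * eNorm (e t) ^ 2 := by
  intro t
  have hM : ∀ i j, HasDerivAt (fun s => M s i j) (matDeriv M t i j) t := fun i j =>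
    (hMdiff i j t).hasDerivAt
  have hedot_Me : deriv e t ⬝ᵥ M t *ᵥ e t = -k * (e t ⬝ᵥ e t) := by
    rw [hdyn, smul_dotProduct, (hMsymm t).inv_mulVec_dotProduct_mulVec (hMinv t), smul_eq_mul]
  have he_Medot : e t ⬝ᵥ M t *ᵥ deriv e t = -k * (e t ⬝ᵥ e t) := by
    rw [hdyn, mulVec_smul, dotProduct_smul, dotProduct_mulVec_inv_mulVec (hMinv t), smul_eq_mul]
  have hrate := (abs_le.mp (hMrate t (e t))).2
  rw [eNorm_sq] at hrate ⊢
  rw [((he t).hasDerivAt.dotProduct_mulVec hM).deriv, hedot_Me, he_Medot]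
  linarith
end

section
/- Let k be a real number. Let η : ℝ → ℝ⁶ be twice differentiable, let M : ℝ → (6×6 real matrices) be such that M(t) is invertible for every t, let F : ℝ → ℝ⁶ be any function (representing the known terms C(η,η̇)η̇ + G + A(η)u), and define the external wrench T(t) = M(t) · η''(t) + F(t). Suppose δ : ℝ → ℝ⁶ is differentiable and satisfies the acceleration-free observer dynamics δ'(t) = -k · M(t)⁻¹ · δ(t) + k · M(t)⁻¹ · (F(t) - k η'(t)) for all t, and define the wrench estimate T̂(t) = δ(t) + k η'(t). Then T̂ is differentiable and satisfies T̂'(t) = k · M(t)⁻¹ · (T(t) - T̂(t)) for all t. -/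
open Matrix

/-! Differentiating `T̂ = δ + k η'` gives `T̂' = δ' + k η''`. Substituting the auxiliary dynamics
for `δ'`, the terms in `δ` and `F - k η'` already have the observer form `k M⁻¹ (·)`, and the
remaining `k η''` equals `k M⁻¹ (M η'')`, which is where the wrench `T = M η'' + F` enters. -/

lemma Matrix.smul_inv_mulVec_observer_error {n R : Type*} [Fintype n] [DecidableEq n]
    [CommRing R] {A : Matrix n n R} (hA : IsUnit A.det) (k : R) (a f d v : n → R) :
    k • A⁻¹ *ᵥ (A *ᵥ a + f - (d + k • v))
      = (-k) • A⁻¹ *ᵥ d + k • A⁻¹ *ᵥ (f - k • v) + k • a := by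
  have hcancel : A⁻¹ *ᵥ (A *ᵥ a) = a := by
    rw [mulVec_mulVec, nonsing_inv_mul _ hA, one_mulVec]
  have hsplit : A *ᵥ a + f - (d + k • v) = A *ᵥ a + ((f - k • v) - d) := by abel
  rw [hsplit, mulVec_add, hcancel, mulVec_sub, neg_smul, smul_add, smul_sub]
  abel

theorem acceleration_free_observer_general
    (k : ℝ) (η : ℝ → Fin 6 → ℝ)
    (hη' : Differentiable ℝ (deriv η))
    (M : ℝ → Matrix (Fin 6) (Fin 6) ℝ) (hMinv : ∀ t, IsUnit (M t).det)
    (F : ℝ → Fin 6 → ℝ)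
    (T : ℝ → Fin 6 → ℝ)
    (hT : ∀ t, T t = (M t).mulVec (deriv (deriv η) t) + F t)
    (δ : ℝ → Fin 6 → ℝ) (hδ : Differentiable ℝ δ)
    (hδdyn : ∀ t, deriv δ t
        = (-k) • (M t)⁻¹.mulVec (δ t) + k • (M t)⁻¹.mulVec (F t - k • deriv η t))
    (That : ℝ → Fin 6 → ℝ)
    (hThat : ∀ t, That t = δ t + k • deriv η t) :
    Differentiable ℝ That ∧
      ∀ t, deriv That t = k • (M t)⁻¹.mulVec (T t - That t) := by
  have hThat_eq : That = fun t => δ t + k • deriv η t := funext hThat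
  have hderiv : ∀ t, HasDerivAt That (deriv δ t + k • deriv (deriv η) t) t := fun t =>
    hThat_eq ▸ (hδ t).hasDerivAt.add ((hη' t).hasDerivAt.const_smul k)
  refine ⟨fun t => (hderiv t).differentiableAt, fun t => ?_⟩
  rw [(hderiv t).deriv, hδdyn, hT, hThat, Matrix.smul_inv_mulVec_observer_error (hMinv t)]

/-- the acceleration-free implementation of the wrench observer.
With auxiliary state `δ' = -k M⁻¹ δ + k M⁻¹ (F - k η')` and estimate `T̂ = δ + k η'`,
where the true wrench is `T = M η'' + F`, the estimate satisfies the original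
observer dynamics `T̂' = k M⁻¹ (T - T̂)`. -/
theorem acceleration_free_observer
    (k : ℝ) (η : ℝ → Fin 6 → ℝ)
    (hη : Differentiable ℝ η) (hη' : Differentiable ℝ (deriv η))
    (M : ℝ → Matrix (Fin 6) (Fin 6) ℝ) (hMinv : ∀ t, IsUnit (M t).det)
    (F : ℝ → Fin 6 → ℝ)
    (T : ℝ → Fin 6 → ℝ)
    (hT : ∀ t, T t = (M t).mulVec (deriv (deriv η) t) + F t)
    (δ : ℝ → Fin 6 → ℝ) (hδ : Differentiable ℝ δ)
    (hδdyn : ∀ t, deriv δ t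
        = (-k) • (M t)⁻¹.mulVec (δ t) + k • (M t)⁻¹.mulVec (F t - k • deriv η t))
    (That : ℝ → Fin 6 → ℝ)
    (hThat : ∀ t, That t = δ t + k • deriv η t) :
    Differentiable ℝ That ∧
      ∀ t, deriv That t = k • (M t)⁻¹.mulVec (T t - That t) :=
  acceleration_free_observer_general k η hη' M hMinv F T hT δ hδ hδdyn That hThat
end
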